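/- Let 𝓛 be a subspace lattice on a complex separable Hilbert space H, let T be a bounded operator on H and let M ∈ 𝓛. Then φ_T(Ψ_T(M)) = φ_T(M) and Ψ_T(Ψ_T(M)) = Ψ_T(M); that is, ω_T(Ψ_T(M)) = ω_T(M). (In projection terms: ω_T(ψ_T(P)^⊥) = ω_T(P).) -/

import Mathlib

open scoped InnerProductSpace

variable {H : Type*} [NormedAddCommGroup H] [InnerProductSpace ℂ H]
  [CompleteSpace H] [TopologicalSpace.SeparableSpace H]

/-- A subspace lattice on `H`: a set of closed subspaces containing `⊥` and `⊤`,
closed under arbitrary intersections and closed linear spans. -/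
def IsSubspaceLattice (𝓛 : Set (Submodule ℂ H)) : Prop :=
  (∀ M ∈ 𝓛, IsClosed (M : Set H)) ∧ ⊥ ∈ 𝓛 ∧ ⊤ ∈ 𝓛 ∧
  (∀ S ⊆ 𝓛, sInf S ∈ 𝓛) ∧ (∀ S ⊆ 𝓛, (sSup S).topologicalClosure ∈ 𝓛)

/-- A nest: a totally ordered subspace lattice. -/
def IsNest (𝓛 : Set (Submodule ℂ H)) : Prop :=
  IsSubspaceLattice 𝓛 ∧ ∀ M ∈ 𝓛, ∀ N ∈ 𝓛, M ≤ N ∨ N ≤ M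

/-- A continuous nest. -/
def IsContinuousNest (𝓛 : Set (Submodule ℂ H)) : Prop :=
  IsNest 𝓛 ∧ ∀ M ∈ 𝓛, M = (sSup {N ∈ 𝓛 | N < M}).topologicalClosure

/-- `M_x`: the intersection of all members of `𝓛` containing `x`. -/
noncomputable def Mx (𝓛 : Set (Submodule ℂ H)) (x : H) : Submodule ℂ H :=
  sInf {M ∈ 𝓛 | x ∈ M}

/-- `M̂_x`: the closed span of all members of `𝓛` orthogonal to `x`. -/
noncomputable def Mhat (𝓛 : Set (Submodule ℂ H)) (x : H) : Submodule ℂ H :=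
  (sSup {M ∈ 𝓛 | ∀ v ∈ M, inner ℂ x v = (0 : ℂ)}).topologicalClosure

/-- `φ_T(M)`: the closed span of all members `M'` of `𝓛` with `T(M') ⊆ M`. -/
noncomputable def phiT (𝓛 : Set (Submodule ℂ H)) (T : H →L[ℂ] H) (M : Submodule ℂ H) :
    Submodule ℂ H :=
  (sSup {M' ∈ 𝓛 | ∀ v ∈ M', T v ∈ M}).topologicalClosure

/-- `Ψ_T(M)`: the intersection of all `M' ∈ 𝓛` with `φ_T(M') = φ_T(M)`. -/
noncomputable def PsiT (𝓛 : Set (Submodule ℂ H)) (T : H →L[ℂ] H) (M : Submodule ℂ H) :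
    Submodule ℂ H :=
  sInf {M' ∈ 𝓛 | phiT 𝓛 T M' = phiT 𝓛 T M}

/-- `σ_T(M)`: the closed span of all `M' ∈ 𝓛` with `φ_T(M') = φ_T(M)`. -/
noncomputable def sigmaT (𝓛 : Set (Submodule ℂ H)) (T : H →L[ℂ] H) (M : Submodule ℂ H) :
    Submodule ℂ H :=
  (sSup {M' ∈ 𝓛 | phiT 𝓛 T M' = phiT 𝓛 T M}).topologicalClosure

/-- The kernel map `ω_T`. -/
noncomputable def omegaT (𝓛 : Set (Submodule ℂ H)) (T : H →L[ℂ] H) (M : Submodule ℂ H) :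
    Submodule ℂ H × Submodule ℂ H :=
  (phiT 𝓛 T M, PsiT 𝓛 T M)

/-- The rank-one operator `x ⊗ y : z ↦ ⟨z, y⟩ x`. -/
noncomputable def rankOne (x y : H) : H →L[ℂ] H :=
  (innerSL ℂ y).smulRight x

/-- The nest algebra of a subspace lattice. -/
def nestAlg (𝓛 : Set (Submodule ℂ H)) : Set (H →L[ℂ] H) :=
  {T | ∀ M ∈ 𝓛, ∀ v ∈ M, T v ∈ M}

/-- Lie module over the nest algebra. -/
def IsLieModule (𝓛 : Set (Submodule ℂ H)) (𝓜 : Submodule ℂ (H →L[ℂ] H)) : Prop :=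
  ∀ A ∈ 𝓜, ∀ T ∈ nestAlg 𝓛, A.comp T - T.comp A ∈ 𝓜

/-- Orthogonal projection of a vector onto a closed subspace (junk value `0` if not closed). -/
noncomputable def projVec (N : Submodule ℂ H) (z : H) : H := by
  classical
  exact if h : IsClosed (N : Set H) then
    have : CompleteSpace N := h.completeSpace_coe
    (Submodule.orthogonalProjection N z : H)
  else 0

/-! Every `N ∈ 𝓛` with `φ_T(N) = φ_T(M)` is closed and `T` maps `φ_T(N)` into `N`, so `T` maps
`φ_T(M)` into their intersection `Ψ_T(M)`; this gives `φ_T(M) ≤ φ_T(Ψ_T(M))`, and `Ψ_T(M) ≤ M`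
the reverse inclusion. Since `Ψ_T` depends on its argument only through `φ_T`, the second
identity follows. -/

section KernelMap

variable {E : Type*} [NormedAddCommGroup E] [InnerProductSpace ℂ E]
  (𝓛 : Set (Submodule ℂ E)) (T : E →L[ℂ] E)

lemma phiT_mono {M N : Submodule ℂ E} (h : M ≤ N) : phiT 𝓛 T M ≤ phiT 𝓛 T N :=
  Submodule.topologicalClosure_mono <| sSup_le_sSup fun _ hK => ⟨hK.1, fun v hv => h (hK.2 v hv)⟩

lemma phiT_le_comap {N : Submodule ℂ E} (hN : IsClosed (N : Set E)) :
    phiT 𝓛 T N ≤ N.comap (T : E →ₗ[ℂ] E) :=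
  Submodule.topologicalClosure_minimal _ (sSup_le fun _ hK => hK.2) (hN.preimage T.continuous)

lemma phiT_le_phiT_of_le_comap {M N : Submodule ℂ E}
    (h : phiT 𝓛 T M ≤ N.comap (T : E →ₗ[ℂ] E)) : phiT 𝓛 T M ≤ phiT 𝓛 T N := by
  refine Submodule.topologicalClosure_minimal _ (sSup_le fun K hK => ?_)
    (Submodule.isClosed_topologicalClosure _)
  have hKM : K ≤ phiT 𝓛 T M := (le_sSup hK).trans (Submodule.le_topologicalClosure _)
  have hKN : K ∈ {K ∈ 𝓛 | ∀ v ∈ K, T v ∈ N} := ⟨hK.1, fun _ hv => h (hKM hv)⟩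
  exact (le_sSup hKN).trans (Submodule.le_topologicalClosure _)

lemma PsiT_le {M : Submodule ℂ E} (hM : M ∈ 𝓛) : PsiT 𝓛 T M ≤ M :=
  sInf_le ⟨hM, rfl⟩

lemma PsiT_congr {M N : Submodule ℂ E} (h : phiT 𝓛 T M = phiT 𝓛 T N) :
    PsiT 𝓛 T M = PsiT 𝓛 T N := by
  simp only [PsiT, h]

lemma phiT_le_comap_PsiT (h𝓛 : ∀ N ∈ 𝓛, IsClosed (N : Set E)) (M : Submodule ℂ E) :
    phiT 𝓛 T M ≤ (PsiT 𝓛 T M).comap (T : E →ₗ[ℂ] E) := fun _ hv =>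
  Submodule.mem_sInf.2 fun N hN => phiT_le_comap 𝓛 T (h𝓛 N hN.1) (hN.2 ▸ hv)

end KernelMap

theorem stmt_6 (𝓛 : Set (Submodule ℂ H)) (h𝓛 : IsSubspaceLattice 𝓛)
    (T : H →L[ℂ] H) (M : Submodule ℂ H) (hM : M ∈ 𝓛) :
    phiT 𝓛 T (PsiT 𝓛 T M) = phiT 𝓛 T M ∧
    PsiT 𝓛 T (PsiT 𝓛 T M) = PsiT 𝓛 T M := by
  have hphi : phiT 𝓛 T (PsiT 𝓛 T M) = phiT 𝓛 T M :=
    le_antisymm (phiT_mono 𝓛 T (PsiT_le 𝓛 T hM))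
      (phiT_le_phiT_of_le_comap 𝓛 T (phiT_le_comap_PsiT 𝓛 T h𝓛.1 M))
  exact ⟨hphi, PsiT_congr 𝓛 T hphi⟩
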